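/- arXiv:2009.07069 — 4 statements merged into one kernel-verified Lean document; each statement's English description precedes it below -/
import Mathlib

section
/- Let 0 < α < π/2, κ = sin α, and K = ∫₀^{π/2} F(1/6, 5/6; 1/2; κ² sin² φ) dφ. Then K = √2 · ∫₀^{α} cos(2ψ/3) / √(cos 2ψ − cos 2α) dψ. -/
open MeasureTheory Real

/-- The Gaussian hypergeometric function `₂F₁(a, b; c; x)` as a power series
with Pochhammer (rising factorial) coefficients. -/
noncomputable def hyp (a b c x : ℝ) : ℝ :=
  ∑' n : ℕ, ((ascPochhammer ℝ n).eval a * (ascPochhammer ℝ n).eval b) /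
    ((ascPochhammer ℝ n).eval c * (n.factorial : ℝ)) * x ^ n

/-!
Put `ω = 1 - 2a`. The hypergeometric equation satisfied by the power series
`F = ₂F₁(a, 1 - a; 1/2; ·)` turns into `g'' = -ω² g` for `g ψ = cos ψ · F (sin² ψ)`, on
`|ψ| < π/2`. Since `g 0 = 1` and `g' 0 = 0`, conservation of the energy `y'² + ω² y²` of
`y = g - cos (ω ·)` forces `y = 0`, that is `F (sin² ψ) = cos (ω ψ) / cos ψ`. For `a = 1/6` the
substitution `sin ψ = sin α sin φ` then carries the `φ`-integral to the `ψ`-integral, because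
`cos 2ψ - cos 2α = 2 sin² α cos² φ`.
-/

open FormalMultilinearSeries Set

section PowerSeries

variable {a : ℕ → ℝ} {r x : ℝ}

def derivCoeff (a : ℕ → ℝ) (n : ℕ) : ℝ := (n + 1) * a (n + 1)

theorem ofScalarsSum_eq_tsum_mul (a : ℕ → ℝ) (x : ℝ) :
    ofScalarsSum a x = ∑' n, a n * x ^ n :=
  ofScalars_sum_eq a x

theorem summable_mul_pow_of_summable_abs (ha : Summable fun n => |a n| * r ^ n) (hx : |x| ≤ r) :
    Summable fun n => a n * x ^ n :=
  ha.of_norm_bounded fun n => by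
    rw [norm_mul, norm_pow, norm_eq_abs, norm_eq_abs]
    gcongr

theorem hasSum_ofScalarsSum (ha : Summable fun n => |a n| * r ^ n) (hx : |x| ≤ r) :
    HasSum (fun n => a n * x ^ n) (ofScalarsSum a x) := by
  rw [ofScalarsSum_eq_tsum_mul]
  exact (summable_mul_pow_of_summable_abs ha hx).hasSum

theorem hasSum_natCast_mul_of_hasSum_derivCoeff {t : ℕ → ℝ} {x s : ℝ}
    (h : HasSum (fun n => derivCoeff t n * x ^ n) s) :
    HasSum (fun n : ℕ => n * t n * x ^ n) (x * s) := by
  rw [← hasSum_nat_add_iff' 1]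
  simpa [derivCoeff, pow_succ, mul_comm, mul_left_comm, mul_assoc] using h.mul_left x

theorem hasDerivAt_ofScalarsSum (ha : Summable fun n => |derivCoeff a n| * r ^ n)
    (hx : |x| < r) : HasDerivAt (ofScalarsSum a) (ofScalarsSum (derivCoeff a) x) x := by
  have hr : 0 < r := (abs_nonneg x).trans_lt hx
  have hu : Summable fun n : ℕ => |a n| * (n * r ^ (n - 1)) := by
    rw [← summable_nat_add_iff 1]
    refine ha.congr fun n => ?_
    rw [derivCoeff, abs_mul, abs_of_nonneg (by positivity : (0 : ℝ) ≤ n + 1)]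
    push_cast
    ring
  have hderiv := hasDerivAt_tsum_of_isPreconnected hu isOpen_Ioo isPreconnected_Ioo
    (g := fun n y => a n * y ^ n) (g' := fun n y => a n * (n * y ^ (n - 1)))
    (fun n y _ => by simpa using (hasDerivAt_pow n y).const_mul (a n))
    (fun n y hy => by
      rw [norm_mul, norm_mul, norm_pow, norm_eq_abs, norm_eq_abs, Nat.abs_cast]
      gcongr
      exact (abs_lt.mpr hy).le)
    (⟨neg_lt_zero.mpr hr, hr⟩ : (0 : ℝ) ∈ Ioo (-r) r)
    (summable_of_ne_finset_zero (s := {0}) fun n hn => by simp_all)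
    (abs_lt.mp hx)
  have hsum : ∑' n, derivCoeff a n * x ^ n = ∑' n : ℕ, a n * (n * x ^ (n - 1)) := by
    rw [eq_comm, tsum_eq_zero_add' ?_]
    · simp [derivCoeff, mul_comm, mul_left_comm]
    · refine (summable_mul_pow_of_summable_abs ha hx.le).congr fun n => ?_
      simp [derivCoeff, mul_comm, mul_left_comm]
  rw [funext (ofScalarsSum_eq_tsum_mul a), ofScalarsSum_eq_tsum_mul, hsum]
  exact hderiv

theorem summable_abs_mul_pow_of_abs_le_quadratic {C : ℝ}
    (ha : ∀ n : ℕ, |a n| ≤ C * ((n + 1) * (n + 2))) (hr0 : 0 ≤ r) (hr : r < 1) :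
    Summable fun n => |a n| * r ^ n := by
  have hr' : ‖r‖ < 1 := by rwa [norm_of_nonneg hr0]
  have hquad : Summable fun n : ℕ => C * ((n : ℝ) ^ 2 * r ^ n + 3 * (n * r ^ n) + 2 * r ^ n) :=
    (((summable_pow_mul_geometric_of_norm_lt_one 2 hr').add
      (by simpa using (summable_pow_mul_geometric_of_norm_lt_one 1 hr').mul_left 3)).add
      ((summable_geometric_of_lt_one hr0 hr).mul_left 2)).mul_left C
  refine hquad.of_nonneg_of_le (fun n => by positivity) fun n => ?_
  calc |a n| * r ^ n ≤ C * ((n + 1) * (n + 2)) * r ^ n := by gcongr; exact ha n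
    _ = _ := by ring

section Bounded

variable {C : ℝ}

theorem abs_le_quadratic_of_abs_le (ha : ∀ n, |a n| ≤ C) (n : ℕ) :
    |a n| ≤ C * ((n + 1) * (n + 2)) :=
  (ha n).trans <| le_mul_of_one_le_right ((abs_nonneg _).trans (ha 0)) <| by
    nlinarith [n.cast_nonneg (α := ℝ)]

theorem abs_derivCoeff_le_quadratic (ha : ∀ n, |a n| ≤ C) (n : ℕ) :
    |derivCoeff a n| ≤ C * ((n + 1) * (n + 2)) := by
  have hC : 0 ≤ C := (abs_nonneg _).trans (ha 0)
  rw [derivCoeff, abs_mul, abs_of_nonneg (by positivity : (0 : ℝ) ≤ n + 1)]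
  calc (n + 1) * |a (n + 1)| ≤ (n + 1) * C := by gcongr; exact ha _
    _ ≤ C * ((n + 1) * (n + 2)) := by nlinarith [mul_nonneg hC (n.cast_nonneg (α := ℝ))]

theorem abs_derivCoeff_derivCoeff_le_quadratic (ha : ∀ n, |a n| ≤ C) (n : ℕ) :
    |derivCoeff (derivCoeff a) n| ≤ C * ((n + 1) * (n + 2)) := by
  rw [derivCoeff, derivCoeff, abs_mul, abs_mul, abs_of_nonneg (by positivity : (0 : ℝ) ≤ n + 1),
    abs_of_nonneg (by positivity : (0 : ℝ) ≤ ↑(n + 1) + 1)]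
  calc (n + 1) * ((↑(n + 1) + 1) * |a (n + 1 + 1)|) ≤ (n + 1) * ((↑(n + 1) + 1) * C) := by
        gcongr; exact ha _
    _ = C * ((n + 1) * (n + 2)) := by push_cast; ring

theorem hasDerivAt_ofScalarsSum_of_abs_le (ha : ∀ n, |a n| ≤ C) (hx : |x| < 1) :
    HasDerivAt (ofScalarsSum a) (ofScalarsSum (derivCoeff a) x) x := by
  obtain ⟨r, hxr, hr⟩ := exists_between hx
  exact hasDerivAt_ofScalarsSum (summable_abs_mul_pow_of_abs_le_quadratic
    (abs_derivCoeff_le_quadratic ha) ((abs_nonneg x).trans hxr.le) hr) hxr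

theorem hasDerivAt_ofScalarsSum_derivCoeff_of_abs_le (ha : ∀ n, |a n| ≤ C) (hx : |x| < 1) :
    HasDerivAt (ofScalarsSum (derivCoeff a)) (ofScalarsSum (derivCoeff (derivCoeff a)) x) x := by
  obtain ⟨r, hxr, hr⟩ := exists_between hx
  exact hasDerivAt_ofScalarsSum (summable_abs_mul_pow_of_abs_le_quadratic
    (abs_derivCoeff_derivCoeff_le_quadratic ha) ((abs_nonneg x).trans hxr.le) hr) hxr

end Bounded

end PowerSeries

theorem eqOn_zero_of_hasDerivAt_neg_mul {s : Set ℝ} (hs : IsOpen s) (hs' : IsPreconnected s)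
    {y y' : ℝ → ℝ} {k t₀ : ℝ} (hk : 0 ≤ k) (hy : ∀ t ∈ s, HasDerivAt y (y' t) t)
    (hy' : ∀ t ∈ s, HasDerivAt y' (-k * y t) t) (ht₀ : t₀ ∈ s) (h0 : y t₀ = 0)
    (h0' : y' t₀ = 0) : EqOn y 0 s := by
  have const_of_deriv_zero : ∀ {f : ℝ → ℝ}, (∀ t ∈ s, HasDerivAt f 0 t) → ∀ t ∈ s, f t = f t₀ :=
    fun hf t ht => hs.is_const_of_deriv_eq_zero hs'
      (fun u hu => (hf u hu).differentiableAt.differentiableWithinAt)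
      (fun u hu => (hf u hu).deriv) ht ht₀
  have henergy := const_of_deriv_zero (f := fun t => y' t ^ 2 + k * y t ^ 2) fun t ht =>
    (((hy' t ht).fun_pow 2).fun_add (((hy t ht).fun_pow 2).const_mul k)).congr_deriv (by ring)
  have hy'_zero : ∀ t ∈ s, y' t = 0 := fun t ht => by
    have := henergy t ht
    simp only [h0, h0'] at this
    nlinarith [sq_nonneg (y' t), mul_nonneg hk (sq_nonneg (y t))]
  intro t ht
  rw [Pi.zero_apply, const_of_deriv_zero (f := y) (fun u hu => hy'_zero u hu ▸ hy u hu) t ht, h0]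

section Hypergeometric

variable {a b c : ℝ}

noncomputable def hypCoeff (a b c : ℝ) (n : ℕ) : ℝ :=
  ((ascPochhammer ℝ n).eval a * (ascPochhammer ℝ n).eval b) /
    ((ascPochhammer ℝ n).eval c * (n.factorial : ℝ))

@[simp]
theorem hypCoeff_zero : hypCoeff a b c 0 = 1 := by simp [hypCoeff]

theorem hypCoeff_succ (hc : 0 < c) (n : ℕ) :
    (n + c) * (n + 1) * hypCoeff a b c (n + 1) = (n + a) * (n + b) * hypCoeff a b c n := by
  have hP : (ascPochhammer ℝ n).eval c ≠ 0 := (ascPochhammer_pos n c hc).ne'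
  have hnc : (n : ℝ) + c ≠ 0 := by positivity
  simp only [hypCoeff, ascPochhammer_succ_eval, Nat.factorial_succ]
  push_cast
  field_simp
  ring

theorem hypCoeff_pos (ha : 0 < a) (hb : 0 < b) (hc : 0 < c) (n : ℕ) : 0 < hypCoeff a b c n := by
  unfold hypCoeff
  have := ascPochhammer_pos n a ha
  have := ascPochhammer_pos n b hb
  have := ascPochhammer_pos n c hc
  positivity

theorem hypCoeff_le_one (ha : 0 < a) (hb : 0 < b) (hc : 0 < c) (hab : a + b ≤ c + 1)
    (habc : a * b ≤ c) (n : ℕ) : hypCoeff a b c n ≤ 1 := by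
  induction n with
  | zero => simp
  | succ n ih =>
    have hpos : (0 : ℝ) < (n + c) * (n + 1) := by positivity
    have hfactor : (n + a) * (n + b) ≤ (n + c) * (n + 1) := by
      nlinarith [n.cast_nonneg (α := ℝ)]
    refine le_of_mul_le_mul_left ?_ hpos
    rw [hypCoeff_succ hc, mul_one]
    calc (n + a) * (n + b) * hypCoeff a b c n ≤ (n + a) * (n + b) * 1 := by
          gcongr
      _ ≤ _ := by linarith

theorem hypergeometric_ode {t : ℕ → ℝ} {x F F' F'' : ℝ}
    (ht : ∀ n : ℕ, (n + c) * (n + 1) * t (n + 1) = (n + a) * (n + b) * t n)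
    (h0 : HasSum (fun n => t n * x ^ n) F)
    (h1 : HasSum (fun n => derivCoeff t n * x ^ n) F')
    (h2 : HasSum (fun n => derivCoeff (derivCoeff t) n * x ^ n) F'') :
    x * (1 - x) * F'' + (c - (a + b + 1) * x) * F' - a * b * F = 0 := by
  have hxF' := hasSum_natCast_mul_of_hasSum_derivCoeff h1
  have hxF'' := hasSum_natCast_mul_of_hasSum_derivCoeff h2
  -- `n * derivCoeff t n` is itself `derivCoeff` of `(m - 1) * t m`
  have hxxF'' : HasSum (fun n : ℕ => n * ((n - 1) * t n) * x ^ n) (x * (x * F'')) := by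
    refine hasSum_natCast_mul_of_hasSum_derivCoeff (hxF''.congr_fun fun n => ?_)
    simp only [derivCoeff]
    push_cast
    ring
  have hsum := ((hxF''.sub hxxF'').add ((h1.mul_left c).sub (hxF'.mul_left (a + b + 1)))).sub
    (h0.mul_left (a * b))
  have hzero : (fun n : ℕ => n * derivCoeff t n * x ^ n - n * ((n - 1) * t n) * x ^ n
      + (c * (derivCoeff t n * x ^ n) - (a + b + 1) * (n * t n * x ^ n))
      - a * b * (t n * x ^ n)) = fun _ => 0 := by
    funext n
    simp only [derivCoeff]
    linear_combination x ^ n * ht n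
  rw [hzero] at hsum
  linear_combination hsum.unique hasSum_zero

theorem hypergeometric_ode_ofScalarsSum {t : ℕ → ℝ} {C x : ℝ}
    (ht : ∀ n : ℕ, (n + c) * (n + 1) * t (n + 1) = (n + a) * (n + b) * t n)
    (hC : ∀ n, |t n| ≤ C) (hx : |x| < 1) :
    x * (1 - x) * ofScalarsSum (derivCoeff (derivCoeff t)) x
      + (c - (a + b + 1) * x) * ofScalarsSum (derivCoeff t) x - a * b * ofScalarsSum t x = 0 :=
  hypergeometric_ode ht
    (hasSum_ofScalarsSum (summable_abs_mul_pow_of_abs_le_quadratic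
      (abs_le_quadratic_of_abs_le hC) (abs_nonneg x) hx) le_rfl)
    (hasSum_ofScalarsSum (summable_abs_mul_pow_of_abs_le_quadratic
      (abs_derivCoeff_le_quadratic hC) (abs_nonneg x) hx) le_rfl)
    (hasSum_ofScalarsSum (summable_abs_mul_pow_of_abs_le_quadratic
      (abs_derivCoeff_derivCoeff_le_quadratic hC) (abs_nonneg x) hx) le_rfl)

theorem hyp_eq_ofScalarsSum (a b c x : ℝ) : hyp a b c x = ofScalarsSum (hypCoeff a b c) x :=
  (ofScalarsSum_eq_tsum_mul _ _).symm

end Hypergeometric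

section SinSq

variable {F F' F'' : ℝ → ℝ} {t : ℝ}

theorem hasDerivAt_sin_sq (t : ℝ) : HasDerivAt (fun t => sin t ^ 2) (2 * sin t * cos t) t := by
  simpa [mul_comm] using (hasDerivAt_sin t).fun_pow 2

theorem hasDerivAt_cos_mul_comp_sin_sq (hF : HasDerivAt F (F' (sin t ^ 2)) (sin t ^ 2)) :
    HasDerivAt (fun t => cos t * F (sin t ^ 2))
      (-sin t * F (sin t ^ 2) + 2 * sin t * cos t ^ 2 * F' (sin t ^ 2)) t :=
  ((hasDerivAt_cos t).fun_mul (hF.comp t (hasDerivAt_sin_sq t))).congr_deriv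
    (by simp only [Function.comp_apply]; ring)

theorem hasDerivAt_cos_mul_comp_sin_sq_deriv_of_ode {l : ℝ}
    (hF : HasDerivAt F (F' (sin t ^ 2)) (sin t ^ 2))
    (hF' : HasDerivAt F' (F'' (sin t ^ 2)) (sin t ^ 2))
    (hode : sin t ^ 2 * (1 - sin t ^ 2) * F'' (sin t ^ 2) + (1 / 2 - 2 * sin t ^ 2) * F' (sin t ^ 2)
      - l * F (sin t ^ 2) = 0) :
    HasDerivAt (fun t => -sin t * F (sin t ^ 2) + 2 * sin t * cos t ^ 2 * F' (sin t ^ 2))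
      (-(1 - 4 * l) * (cos t * F (sin t ^ 2))) t := by
  refine ((hasDerivAt_sin t).fun_neg.fun_mul (hF.comp t (hasDerivAt_sin_sq t))).fun_add
    ((((hasDerivAt_sin t).const_mul 2).fun_mul ((hasDerivAt_cos t).fun_pow 2)).fun_mul
      (hF'.comp t (hasDerivAt_sin_sq t))) |>.congr_deriv ?_
  simp only [Function.comp_apply]
  linear_combination (4 * cos t) * hode
    + (2 * cos t * F' (sin t ^ 2) + 4 * sin t ^ 2 * cos t * F'' (sin t ^ 2)) * sin_sq_add_cos_sq t

theorem hyp_one_sub_half_sin_sq {a t : ℝ} (ha0 : 0 < a) (ha1 : a < 1)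
    (ht : t ∈ Ioo (-(π / 2)) (π / 2)) :
    hyp a (1 - a) (1 / 2) (sin t ^ 2) = cos ((1 - 2 * a) * t) / cos t := by
  set T := hypCoeff a (1 - a) (1 / 2)
  set ω := 1 - 2 * a
  have hT : ∀ n, |T n| ≤ 1 := fun n => by
    rw [abs_of_pos (hypCoeff_pos ha0 (by linarith) (by norm_num) n)]
    exact hypCoeff_le_one ha0 (by linarith) (by norm_num) (by linarith) (by nlinarith) n
  have hsin_sq : ∀ t ∈ Ioo (-(π / 2)) (π / 2), |sin t ^ 2| < 1 := fun t ht => by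
    rw [abs_of_nonneg (sq_nonneg _), ← cos_sq_add_sin_sq t]
    nlinarith [cos_pos_of_mem_Ioo ht]
  have hF := fun t ht => hasDerivAt_ofScalarsSum_of_abs_le hT (hsin_sq t ht)
  have hF' := fun t ht => hasDerivAt_ofScalarsSum_derivCoeff_of_abs_le hT (hsin_sq t ht)
  have hode : ∀ t ∈ Ioo (-(π / 2)) (π / 2), sin t ^ 2 * (1 - sin t ^ 2) *
      ofScalarsSum (derivCoeff (derivCoeff T)) (sin t ^ 2)
      + (1 / 2 - 2 * sin t ^ 2) * ofScalarsSum (derivCoeff T) (sin t ^ 2)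
      - a * (1 - a) * ofScalarsSum T (sin t ^ 2) = 0 := fun t ht => by
    rw [← hypergeometric_ode_ofScalarsSum (hypCoeff_succ (by norm_num)) hT (hsin_sq t ht)]
    ring
  have hzero := eqOn_zero_of_hasDerivAt_neg_mul isOpen_Ioo isPreconnected_Ioo (sq_nonneg ω)
    (y := fun t => cos t * ofScalarsSum T (sin t ^ 2) - cos (ω * t))
    (y' := fun t => -sin t * ofScalarsSum T (sin t ^ 2)
      + 2 * sin t * cos t ^ 2 * ofScalarsSum (derivCoeff T) (sin t ^ 2) + ω * sin (ω * t))
    (fun t ht => ((hasDerivAt_cos_mul_comp_sin_sq (hF t ht)).fun_sub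
      ((hasDerivAt_id t).const_mul ω).cos).congr_deriv (by simp only [id_eq, mul_one]; ring))
    (fun t ht => ((hasDerivAt_cos_mul_comp_sin_sq_deriv_of_ode (hF t ht) (hF' t ht)
      (hode t ht)).fun_add (((hasDerivAt_id t).const_mul ω).sin.const_mul ω)).congr_deriv
        (by simp only [id_eq, mul_one]; ring))
    (t₀ := 0) ⟨by linarith [pi_pos], by linarith [pi_pos]⟩
    (by simp [T, ofScalarsSum_zero]) (by simp) ht
  rw [hyp_eq_ofScalarsSum, eq_div_iff (cos_pos_of_mem_Ioo ht).ne']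
  simp only [Pi.zero_apply] at hzero
  linarith

theorem setIntegral_Ioo_eq_comp_arcsin_sin_mul_sin {α : ℝ} (hα0 : 0 < α) (hα1 : α ≤ π / 2)
    (g : ℝ → ℝ) :
    ∫ ψ in Ioo 0 α, g ψ = ∫ φ in Ioo 0 (π / 2),
      sin α * cos φ / √(1 - (sin α * sin φ) ^ 2) * g (arcsin (sin α * sin φ)) := by
  have hsinα : 0 < sin α := sin_pos_of_pos_of_lt_pi hα0 (by linarith [pi_pos])
  set u := fun φ => arcsin (sin α * sin φ)
  have hmono : StrictMonoOn u (Icc 0 (π / 2)) := by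
    refine strictMonoOn_arcsin.comp (fun φ hφ ψ hψ h => ?_) fun φ hφ => ?_
    · exact mul_lt_mul_of_pos_left (strictMonoOn_sin ⟨by linarith [hφ.1, pi_pos], hφ.2⟩
        ⟨by linarith [hψ.1, pi_pos], hψ.2⟩ h) hsinα
    · have h1 := sin_le_one α
      have h2 := sin_le_one φ
      have h3 : 0 ≤ sin φ := sin_nonneg_of_nonneg_of_le_pi hφ.1 (by linarith [hφ.2, pi_pos])
      constructor <;> nlinarith
  have himage : u '' Ioo 0 (π / 2) = Ioo 0 α := by
    rw [ContinuousOn.image_Ioo_of_strictMonoOn (by positivity) (by fun_prop) hmono]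
    simp [u, arcsin_sin (by linarith [pi_pos] : -(π / 2) ≤ α) hα1]
  have hderiv : ∀ φ ∈ Ioo 0 (π / 2), HasDerivWithinAt u
      (sin α * cos φ / √(1 - (sin α * sin φ) ^ 2)) (Ioo 0 (π / 2)) φ := fun φ hφ => by
    have hcosφ := cos_pos_of_mem_Ioo ⟨by linarith [hφ.1, pi_pos], hφ.2⟩
    have hsinφ := sin_pos_of_pos_of_lt_pi hφ.1 (by linarith [hφ.2, pi_pos])
    have hx : sin α * sin φ < 1 := by
      nlinarith [sin_le_one α, sin_sq_add_cos_sq φ]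
    have hx' : -1 < sin α * sin φ := by nlinarith
    refine HasDerivAt.hasDerivWithinAt ?_
    refine ((hasDerivAt_arcsin hx'.ne' hx.ne).comp φ
      ((hasDerivAt_sin φ).const_mul _)).congr_deriv ?_
    ring
  rw [← himage, integral_image_eq_integral_abs_deriv_smul measurableSet_Ioo hderiv
    (hmono.injOn.mono Ioo_subset_Icc_self)]
  refine setIntegral_congr_fun measurableSet_Ioo fun φ hφ => ?_
  rw [smul_eq_mul, abs_of_nonneg]
  have := cos_pos_of_mem_Ioo ⟨by linarith [hφ.1, pi_pos], hφ.2⟩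
  positivity

theorem cos_two_mul_arcsin_sub_cos_two_mul (α φ : ℝ) :
    cos (2 * arcsin (sin α * sin φ)) - cos (2 * α) = 2 * (sin α * cos φ) ^ 2 := by
  have hsin : sin (arcsin (sin α * sin φ)) = sin α * sin φ := by
    refine sin_arcsin ?_ ?_ <;>
      nlinarith [neg_one_le_sin α, sin_le_one α, neg_one_le_sin φ, sin_le_one φ]
  rw [cos_two_mul, cos_two_mul, cos_sq', cos_sq', hsin]
  linear_combination (-2 * sin α ^ 2) * sin_sq_add_cos_sq φ

theorem hyp_sixth_sin_sq_mul_sin_sq {α φ : ℝ} (hα0 : 0 < α) (hα1 : α ≤ π / 2)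
    (hφ : φ ∈ Ioo 0 (π / 2)) :
    hyp (1 / 6) (5 / 6) (1 / 2) (sin α ^ 2 * sin φ ^ 2) =
      √2 * (sin α * cos φ / √(1 - (sin α * sin φ) ^ 2) *
        (cos (2 * arcsin (sin α * sin φ) / 3) /
          √(cos (2 * arcsin (sin α * sin φ)) - cos (2 * α)))) := by
  set x := sin α * sin φ
  have hsinα : 0 < sin α := sin_pos_of_pos_of_lt_pi hα0 (by linarith [pi_pos])
  have hcosφ := cos_pos_of_mem_Ioo ⟨by linarith [hφ.1, pi_pos], hφ.2⟩
  have hsinφ := sin_pos_of_pos_of_lt_pi hφ.1 (by linarith [hφ.2, pi_pos])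
  have hx1 : x < 1 := by nlinarith [sin_le_one α, sin_sq_add_cos_sq φ]
  have hx0 : 0 < x := by positivity
  have hψ : arcsin x ∈ Ioo (-(π / 2)) (π / 2) :=
    ⟨by linarith [arcsin_nonneg.mpr hx0.le, pi_pos], arcsin_lt_pi_div_two.mpr hx1⟩
  have hcosψ : √(1 - x ^ 2) = cos (arcsin x) := (cos_arcsin x).symm
  have hsqrt : √(cos (2 * arcsin x) - cos (2 * α)) = √2 * (sin α * cos φ) := by
    rw [cos_two_mul_arcsin_sub_cos_two_mul, sqrt_mul zero_le_two, sqrt_sq (by positivity)]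
  have hsq : sin α ^ 2 * sin φ ^ 2 = sin (arcsin x) ^ 2 := by
    rw [sin_arcsin (by linarith) hx1.le]; ring
  have heval := hyp_one_sub_half_sin_sq (a := 1 / 6) (by norm_num) (by norm_num) hψ
  rw [show (1 : ℝ) - 1 / 6 = 5 / 6 by norm_num, show (1 - 2 * (1 / 6 : ℝ)) * arcsin x
    = 2 * arcsin x / 3 by ring] at heval
  rw [hsq, heval, hsqrt, hcosψ]
  have := cos_pos_of_mem_Ioo hψ
  field_simp

theorem K_integral_formula (α : ℝ) (hα : α ∈ Set.Ioo (0:ℝ) (π/2)) (κ : ℝ) (hκ : κ = Real.sin α) :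
    (∫ φ in (0:ℝ)..(π/2), hyp (1/6) (5/6) (1/2) (κ^2 * Real.sin φ ^ 2)) =
      Real.sqrt 2 * ∫ ψ in (0:ℝ)..α,
        Real.cos (2 * ψ / 3) / Real.sqrt (Real.cos (2 * ψ) - Real.cos (2 * α)) := by
  obtain ⟨hα0, hα1⟩ := hα
  subst hκ
  rw [intervalIntegral.integral_of_le (by positivity), intervalIntegral.integral_of_le hα0.le,
    integral_Ioc_eq_integral_Ioo, integral_Ioc_eq_integral_Ioo,
    setIntegral_Ioo_eq_comp_arcsin_sin_mul_sin hα0 hα1.le, ← integral_const_mul]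
  exact setIntegral_congr_fun measurableSet_Ioo fun φ hφ =>
    hyp_sixth_sin_sq_mul_sin_sq hα0 hα1.le hφ
end SinSq
end

section
/- Let 0 < α < π/2 and κ = sin α. Then √2 ∫₀^{α} cos(2ψ/3)/√(cos 2ψ − cos 2α) dψ = √(3/2) · ∫_{cos(2(π+α)/3)}^{cos(2(π−α)/3)} dx / √(4x³ − 3x − (1 − 2κ²)). -/
/-!
Substituting `x = cos t` and then `t = 2(π + ψ)/3` turns the right-hand integral into
`(2/3) ∫_{-α}^{α} sin (2(π + ψ)/3) / √(cos 2ψ - cos 2α) dψ`, since by triplication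
`4 cos³ t - 3 cos t = cos 3t = cos 2ψ`. Folding `[-α, α]` onto `[0, α]` adds the integrand at `ψ`
and `-ψ`, and `sin (2π/3 + u) + sin (2π/3 - u) = √3 cos u` gives the left-hand side. The integrands
are nonnegative, so no integrability of their endpoint singularities is ever needed: the change of
variables holds for arbitrary integrands, and the folding is done with lower Lebesgue integrals.
-/

open Real MeasureTheory Set
open scoped ENNReal

theorem setLIntegral_Ioc_symm_eq_add_comp_neg {a : ℝ} (ha : 0 ≤ a) {f : ℝ → ℝ≥0∞}
    (hf : Measurable f) :
    ∫⁻ x in Ioc (-a) a, f x = ∫⁻ x in Ioc 0 a, (f x + f (-x)) := by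
  have hneg : ∫⁻ x in Ioc (-a) 0, f x = ∫⁻ x in Ioc 0 a, f (-x) := calc
    _ = ∫⁻ x in Ico 0 a, f (-x) := by
      rw [(Measure.measurePreserving_neg volume).setLIntegral_comp_emb
        (Homeomorph.neg ℝ).measurableEmbedding, image_neg_Ico, neg_zero]
    _ = _ := setLIntegral_congr Ico_ae_eq_Ioc
  rw [← Ioc_union_Ioc_eq_Ioc (neg_nonpos.2 ha) ha,
    lintegral_union measurableSet_Ioc (Ioc_disjoint_Ioc_of_le le_rfl), hneg,
    lintegral_add_left hf, add_comm]

theorem integral_symm_eq_integral_add_comp_neg {a : ℝ} (ha : 0 ≤ a) {φ : ℝ → ℝ}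
    (hφm : Measurable φ) (hφ : ∀ x ∈ Icc (-a) a, 0 ≤ φ x) :
    ∫ x in -a..a, φ x = ∫ x in 0..a, (φ x + φ (-x)) := by
  have hnonneg : ∀ x ∈ Ioc 0 a, 0 ≤ φ x ∧ 0 ≤ φ (-x) := fun x hx =>
    ⟨hφ x ⟨by linarith [hx.1], hx.2⟩, hφ (-x) ⟨by linarith [hx.2], by linarith [hx.1]⟩⟩
  rw [intervalIntegral.integral_of_le (by linarith), intervalIntegral.integral_of_le ha,
    integral_eq_lintegral_of_nonneg_ae
      ((ae_restrict_iff' measurableSet_Ioc).2 (Filter.Eventually.of_forall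
        fun x hx => hφ x (Ioc_subset_Icc_self hx))) hφm.aestronglyMeasurable,
    integral_eq_lintegral_of_nonneg_ae
      ((ae_restrict_iff' measurableSet_Ioc).2 (Filter.Eventually.of_forall
        fun x hx => add_nonneg (hnonneg x hx).1 (hnonneg x hx).2))
      (hφm.add (hφm.comp measurable_neg)).aestronglyMeasurable,
    setLIntegral_Ioc_symm_eq_add_comp_neg ha hφm.ennreal_ofReal,
    setLIntegral_congr_fun measurableSet_Ioc fun x hx =>
      ENNReal.ofReal_add (hnonneg x hx).1 (hnonneg x hx).2]

theorem integral_sin_mul_comp_cos {a b : ℝ} (ha : 0 ≤ a) (hab : a ≤ b) (hb : b ≤ π)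
    (G : ℝ → ℝ) :
    ∫ t in a..b, sin t * G (cos t) = ∫ x in cos b..cos a, G x := by
  have hanti : StrictAntiOn cos (Icc a b) := strictAntiOn_cos.mono (Icc_subset_Icc ha hb)
  have himage : cos '' Ioo a b = Ioo (cos b) (cos a) :=
    continuous_cos.continuousOn.image_Ioo_of_strictAntiOn hab hanti
  have hderiv : ∀ t ∈ Ioo a b, HasDerivWithinAt cos (-sin t) (Ioo a b) t :=
    fun t _ => (hasDerivAt_cos t).hasDerivWithinAt
  rw [intervalIntegral.integral_of_le hab, intervalIntegral.integral_of_le (hanti.antitoneOn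
      ⟨le_rfl, hab⟩ ⟨hab, le_rfl⟩ hab), integral_Ioc_eq_integral_Ioo,
    integral_Ioc_eq_integral_Ioo, ← himage,
    integral_image_eq_integral_abs_deriv_smul measurableSet_Ioo hderiv
      (hanti.injOn.mono Ioo_subset_Icc_self)]
  refine setIntegral_congr_fun measurableSet_Ioo fun t ht => ?_
  rw [abs_neg, abs_of_nonneg (sin_nonneg_of_nonneg_of_le_pi (by linarith [ht.1])
    (by linarith [ht.2])), smul_eq_mul]

theorem sin_add_two_pi_div_three_add_sin_neg_add (x : ℝ) :
    sin (x + 2 * π / 3) + sin (-x + 2 * π / 3) = √3 * cos x := by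
  have h : sin (2 * π / 3) = √3 / 2 := by
    rw [show 2 * π / 3 = π - π / 3 by ring, sin_pi_sub, sin_pi_div_three]
  rw [sin_add, sin_add, sin_neg, cos_neg, h]
  ring

theorem integral_transform (α : ℝ) (hα : α ∈ Set.Ioo (0:ℝ) (π/2)) (κ : ℝ) (hκ : κ = Real.sin α) :
    Real.sqrt 2 * (∫ ψ in (0:ℝ)..α,
        Real.cos (2 * ψ / 3) / Real.sqrt (Real.cos (2 * ψ) - Real.cos (2 * α))) =
      Real.sqrt (3/2) * ∫ x in (Real.cos (2 * (π + α) / 3))..(Real.cos (2 * (π - α) / 3)),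
        1 / Real.sqrt (4 * x ^ 3 - 3 * x - (1 - 2 * κ^2)) := by
  obtain ⟨hα0, hαπ⟩ := hα
  have hκα : 1 - 2 * κ ^ 2 = cos (2 * α) := by rw [hκ, cos_two_mul, cos_sq']; ring
  set φ : ℝ → ℝ := fun ψ => sin (2 / 3 * ψ + 2 * π / 3) / √(cos (2 * ψ) - cos (2 * α))
  have hsubst : ∫ x in cos (2 * (π + α) / 3)..cos (2 * (π - α) / 3),
      1 / √(4 * x ^ 3 - 3 * x - cos (2 * α)) = 2 / 3 * ∫ ψ in -α..α, φ ψ := by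
    have htriple : ∀ ψ, 4 * cos (2 / 3 * ψ + 2 * π / 3) ^ 3 - 3 * cos (2 / 3 * ψ + 2 * π / 3)
        = cos (2 * ψ) := fun ψ => by
      rw [← cos_three_mul, show 3 * (2 / 3 * ψ + 2 * π / 3) = 2 * ψ + 2 * π by ring,
        cos_add_two_pi]
    have hlinear := intervalIntegral.integral_comp_mul_add (a := -α) (b := α)
      (fun t => sin t * (1 / √(4 * cos t ^ 3 - 3 * cos t - cos (2 * α))))
      (by norm_num : (2 / 3 : ℝ) ≠ 0) (2 * π / 3)
    rw [smul_eq_mul, eq_inv_mul_iff_mul_eq₀ (by norm_num)] at hlinear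
    rw [← integral_sin_mul_comp_cos (by linarith) (by linarith) (by linarith),
      show 2 * (π - α) / 3 = 2 / 3 * -α + 2 * π / 3 by ring,
      show 2 * (π + α) / 3 = 2 / 3 * α + 2 * π / 3 by ring, ← hlinear]
    simp only [htriple, φ, mul_one_div]
  have hφ_even : ∀ ψ, φ ψ + φ (-ψ) = √3 * (cos (2 * ψ / 3) / √(cos (2 * ψ) - cos (2 * α))) := by
    intro ψ
    simp only [φ, mul_neg, cos_neg]
    rw [← add_div, sin_add_two_pi_div_three_add_sin_neg_add, mul_div_assoc,
      show 2 / 3 * ψ = 2 * ψ / 3 by ring]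
  have hconst : √(3 / 2) * (2 / 3 * √3) = √2 := by
    have h3 : √3 * √3 = 3 := mul_self_sqrt zero_le_three
    have h2 : √2 * √2 = 2 := mul_self_sqrt zero_le_two
    rw [sqrt_div' _ zero_le_two, div_mul_eq_mul_div, div_eq_iff (by positivity)]
    linear_combination 2 / 3 * h3 - h2
  rw [hκα, hsubst, integral_symm_eq_integral_add_comp_neg hα0.le (by fun_prop) ?_]
  · simp only [hφ_even, intervalIntegral.integral_const_mul, ← mul_assoc, hconst]
  · intro ψ hψ
    exact div_nonneg (sin_nonneg_of_nonneg_of_le_pi (by linarith [hψ.1]) (by linarith [hψ.2]))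
      (sqrt_nonneg _)
end

section
/- Let 0 < β < π/3 and x = 2 sin β / (sin β + √3 cos β). Then (3/4)·x²/(1 − x + x²) = sin² β and 3·(1 − x)/(1 − x + x²) = 3 − 4 sin² β; consequently (27/4)·x²(1−x)²/(1 − x + x²)³ = sin² 3β. -/
open Real

/-!
With `d = sin β + √3 cos β = 2 sin (β + π/3)`, which is positive for `0 < β < π/3`, and
`x = 2 sin β / d`, the identity `sin² β + cos² β = 1` gives `1 - x + x² = 3 / d²`. The first two
identities follow by clearing `d`, and the third is the first times the square of the second,
by the triplication formula `sin 3β = sin β (3 - 4 sin² β)`.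
-/

lemma sin_add_sqrt_three_mul_cos (β : ℝ) :
    sin β + √3 * cos β = 2 * sin (β + π / 3) := by
  rw [sin_add, sin_pi_div_three, cos_pi_div_three]
  ring

lemma sin_add_sqrt_three_mul_cos_pos {β : ℝ} (hβ : β ∈ Set.Ioo (-(π / 3)) (2 * π / 3)) :
    0 < sin β + √3 * cos β := by
  rw [sin_add_sqrt_three_mul_cos]
  have := hβ.1
  have := hβ.2
  exact mul_pos two_pos (sin_pos_of_pos_of_lt_pi (by linarith) (by linarith))

section Parametrization

variable {β x : ℝ} (hd : sin β + √3 * cos β ≠ 0)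
  (hx : x = 2 * sin β / (sin β + √3 * cos β))
include hd hx

lemma one_sub_add_sq_eq_three_div_sq :
    1 - x + x ^ 2 = 3 / (sin β + √3 * cos β) ^ 2 := by
  have h3 : √3 ^ 2 = 3 := sq_sqrt (by norm_num)
  rw [hx]
  field_simp
  linear_combination cos β ^ 2 * h3 + 3 * sin_sq_add_cos_sq β

lemma three_div_four_mul_sq_div_eq_sin_sq :
    (3 / 4) * x ^ 2 / (1 - x + x ^ 2) = sin β ^ 2 := by
  rw [one_sub_add_sq_eq_three_div_sq hd hx, hx]
  field_simp
  ring

lemma three_mul_one_sub_div_eq :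
    3 * (1 - x) / (1 - x + x ^ 2) = 3 - 4 * sin β ^ 2 := by
  have h3 : √3 ^ 2 = 3 := sq_sqrt (by norm_num)
  rw [one_sub_add_sq_eq_three_div_sq hd hx, hx]
  field_simp
  linear_combination cos β ^ 2 * h3 + 3 * sin_sq_add_cos_sq β

end Parametrization

theorem x_parametrization (β : ℝ) (hβ : β ∈ Set.Ioo (0:ℝ) (π/3))
    (x : ℝ) (hx : x = 2 * Real.sin β / (Real.sin β + Real.sqrt 3 * Real.cos β)) :
    (3/4) * x ^ 2 / (1 - x + x ^ 2) = Real.sin β ^ 2 ∧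
      3 * (1 - x) / (1 - x + x ^ 2) = 3 - 4 * Real.sin β ^ 2 ∧
      (27/4) * x ^ 2 * (1 - x) ^ 2 / (1 - x + x ^ 2) ^ 3 = Real.sin (3 * β) ^ 2 := by
  have hd : sin β + √3 * cos β ≠ 0 := by
    have := pi_pos
    exact (sin_add_sqrt_three_mul_cos_pos ⟨by linarith [hβ.1], by linarith [hβ.2]⟩).ne'
  have h1 := three_div_four_mul_sq_div_eq_sin_sq hd hx
  have h2 := three_mul_one_sub_div_eq hd hx
  refine ⟨h1, h2, ?_⟩
  have hsplit : (27/4) * x ^ 2 * (1 - x) ^ 2 / (1 - x + x ^ 2) ^ 3 =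
      ((3/4) * x ^ 2 / (1 - x + x ^ 2)) * (3 * (1 - x) / (1 - x + x ^ 2)) ^ 2 := by
    generalize 1 - x + x ^ 2 = q
    ring
  rw [hsplit, h1, h2, sin_three_mul]
  ring
end

section
/- The map x ↦ ξ from (0,1) to (0,1) determined by 4ξ(1 − ξ) = (27/4)·x²(1 − x)²/(1 − x + x²)³ together with the parametrizations ξ = sin²α (α ∈ (0, π/2)), x = 2 sin β/(sin β + √3 cos β) (β ∈ (0, π/3)), 2α = 3β, is a strictly increasing bijection; moreover this bijection is invariant under the simultaneous replacements x ↦ 1 − x, ξ ↦ 1 − ξ. -/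
open Real Set

/-!
Put `tan β = √3 x / (2 - x)`, which inverts `x = 2 sin β / (sin β + √3 cos β)`, and `ξ = sin² (3β/2)`.
As `x` runs over `[0, 1]`, `β` increases from `0` to `π/3`, so `3β/2` sweeps `[0, π/2]`, where `sin²`
increases from `0` to `1`. Then `4ξ(1 - ξ) = sin² (3β)`, and the triple-angle formula together with
`sin² β = 3x² / (4(1 - x + x²))` gives the rational function. By the arctan addition formula,
`x ↦ 1 - x` sends `β` to `π/3 - β`, hence `3β/2` to `π/2 - 3β/2`, exchanging `sin²` and `cos²`.
-/

noncomputable def modularAngle (x : ℝ) : ℝ := arctan (√3 * x / (2 - x))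

noncomputable def modularMap (x : ℝ) : ℝ := sin (3 / 2 * modularAngle x) ^ 2

lemma sqrt_three_sq : √3 ^ 2 = 3 := sq_sqrt (by norm_num)

lemma one_sub_add_sq_pos (x : ℝ) : 0 < 1 - x + x ^ 2 := by nlinarith [sq_nonneg (x - 1 / 2)]

lemma Icc_zero_one_subset_Iio_two : Icc (0 : ℝ) 1 ⊆ Iio 2 :=
  (Icc_subset_Iio_iff zero_le_one).2 one_lt_two

lemma modularAngle_zero : modularAngle 0 = 0 := by simp [modularAngle]

lemma modularAngle_one : modularAngle 1 = π / 3 := by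
  norm_num [modularAngle, arctan_sqrt_three]

lemma strictMonoOn_modularAngle : StrictMonoOn modularAngle (Iio 2) := by
  intro a ha b hb hab
  have h2a : 0 < 2 - a := sub_pos.2 ha
  have h2b : 0 < 2 - b := sub_pos.2 hb
  refine arctan_strictMono ((div_lt_div_iff₀ h2a h2b).2 ?_)
  nlinarith [show (0 : ℝ) < √3 by positivity]

lemma continuousOn_modularAngle : ContinuousOn modularAngle (Iio 2) := by
  refine continuous_arctan.comp_continuousOn (ContinuousOn.div (by fun_prop) (by fun_prop) ?_)
  exact fun x hx => (sub_pos.2 hx).ne'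

lemma modularAngle_add_modularAngle_one_sub {x : ℝ} (hx : x ∈ Ioo (-1) 2) :
    modularAngle x + modularAngle (1 - x) = π / 3 := by
  obtain ⟨h1, h2⟩ := hx
  have h1x : 0 < 1 + x := by linarith
  have hprod : √3 * x / (2 - x) * (√3 * (1 - x) / (2 - (1 - x))) < 1 := by
    rw [show 2 - (1 - x) = 1 + x by ring, div_mul_div_comm, div_lt_one (mul_pos (by linarith) h1x)]
    nlinarith [sqrt_three_sq, one_sub_add_sq_pos x]
  rw [modularAngle, modularAngle, arctan_add hprod, ← arctan_sqrt_three]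
  congr 1
  rw [div_eq_iff (sub_pos.2 hprod).ne', show 2 - (1 - x) = 1 + x by ring]
  field_simp
  linear_combination (x - x ^ 2) * sqrt_three_sq

lemma modularAngle_two_mul_sin_div {β : ℝ} (hβ : β ∈ Ioo (-(π / 2)) (π / 2))
    (hD : sin β + √3 * cos β ≠ 0) :
    modularAngle (2 * sin β / (sin β + √3 * cos β)) = β := by
  have hc : cos β ≠ 0 := (cos_pos_of_mem_Ioo hβ).ne'
  have htan : √3 * (2 * sin β / (sin β + √3 * cos β)) / (2 - 2 * sin β / (sin β + √3 * cos β))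
      = tan β := by
    rw [tan_eq_sin_div_cos]
    field_simp
    ring
  rw [modularAngle, htan, arctan_tan hβ.1 hβ.2]

lemma sin_sq_modularAngle {x : ℝ} (hx : x ≠ 2) :
    sin (modularAngle x) ^ 2 = 3 * x ^ 2 / (4 * (1 - x + x ^ 2)) := by
  have h2x : 2 - x ≠ 0 := sub_ne_zero.2 (Ne.symm hx)
  have hq := (one_sub_add_sq_pos x).ne'
  rw [modularAngle, sin_sq_arctan]
  field_simp
  rw [sqrt_three_sq]
  ring

lemma sin_sq_three_mul (θ : ℝ) : sin (3 * θ) ^ 2 = sin θ ^ 2 * (3 - 4 * sin θ ^ 2) ^ 2 := by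
  rw [sin_three_mul]; ring

lemma sin_sq_two_mul (θ : ℝ) : sin (2 * θ) ^ 2 = 4 * sin θ ^ 2 * (1 - sin θ ^ 2) := by
  rw [sin_two_mul, ← cos_sq']; ring

lemma strictMonoOn_sin_sq : StrictMonoOn (fun θ => sin θ ^ 2) (Icc 0 (π / 2)) := by
  intro a ha b hb hab
  have hπ := pi_pos
  have hsin : sin a < sin b :=
    strictMonoOn_sin ⟨by linarith [ha.1], ha.2⟩ ⟨by linarith [hb.1], hb.2⟩ hab
  exact pow_lt_pow_left₀ hsin (sin_nonneg_of_nonneg_of_le_pi ha.1 (by linarith [ha.2])) two_ne_zero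

lemma modularMap_zero : modularMap 0 = 0 := by simp [modularMap, modularAngle_zero]

lemma modularMap_one : modularMap 1 = 1 := by
  rw [modularMap, modularAngle_one, show 3 / 2 * (π / 3) = π / 2 by ring, sin_pi_div_two, one_pow]

lemma strictMonoOn_modularMap : StrictMonoOn modularMap (Icc 0 1) := by
  have hmono : StrictMonoOn modularAngle (Icc 0 1) :=
    strictMonoOn_modularAngle.mono Icc_zero_one_subset_Iio_two
  have hmaps : MapsTo (fun x => 3 / 2 * modularAngle x) (Icc 0 1) (Icc 0 (π / 2)) := by
    intro x hx
    have h0 := hmono.monotoneOn (left_mem_Icc.2 zero_le_one) hx hx.1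
    have h1 := hmono.monotoneOn hx (right_mem_Icc.2 zero_le_one) hx.2
    rw [modularAngle_zero] at h0
    rw [modularAngle_one] at h1
    constructor <;> linarith
  exact strictMonoOn_sin_sq.comp (fun a ha b hb hab => by simpa using hmono ha hb hab) hmaps

lemma continuousOn_modularMap : ContinuousOn modularMap (Iio 2) :=
  (continuous_sin.comp_continuousOn (continuousOn_const.mul continuousOn_modularAngle)).pow 2

lemma bijOn_modularMap : BijOn modularMap (Ioo 0 1) (Ioo 0 1) := by
  have himage := (continuousOn_modularMap.mono Icc_zero_one_subset_Iio_two).image_Ioo_of_strictMonoOn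
    zero_le_one strictMonoOn_modularMap
  rw [modularMap_zero, modularMap_one] at himage
  simpa only [himage] using (strictMonoOn_modularMap.mono Ioo_subset_Icc_self).injOn.bijOn_image

lemma four_mul_modularMap_mul_one_sub {x : ℝ} (hx : x ≠ 2) :
    4 * modularMap x * (1 - modularMap x) =
      27 / 4 * x ^ 2 * (1 - x) ^ 2 / (1 - x + x ^ 2) ^ 3 := by
  have hq := (one_sub_add_sq_pos x).ne'
  rw [modularMap, ← sin_sq_two_mul, ← mul_assoc, show (2 : ℝ) * (3 / 2) = 3 by norm_num,
    sin_sq_three_mul, sin_sq_modularAngle hx]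
  field_simp
  ring

lemma modularMap_one_sub {x : ℝ} (hx : x ∈ Ioo (-1) 2) : modularMap (1 - x) = 1 - modularMap x := by
  have hangle : modularAngle (1 - x) = π / 3 - modularAngle x :=
    eq_sub_of_add_eq' (modularAngle_add_modularAngle_one_sub hx)
  rw [modularMap, modularMap, hangle, mul_sub, show 3 / 2 * (π / 3) = π / 2 by ring,
    sin_pi_div_two_sub, cos_sq']

lemma modularMap_two_mul_sin_div {β : ℝ} (hβ : β ∈ Ioo (-(π / 2)) (π / 2))
    (hD : sin β + √3 * cos β ≠ 0) :
    modularMap (2 * sin β / (sin β + √3 * cos β)) = sin (3 * β / 2) ^ 2 := by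
  rw [modularMap, modularAngle_two_mul_sin_div hβ hD, mul_div_right_comm]

theorem modular_bijection :
    ∃ g : ℝ → ℝ,
      StrictMonoOn g (Set.Ioo (0:ℝ) 1) ∧
      Set.BijOn g (Set.Ioo (0:ℝ) 1) (Set.Ioo (0:ℝ) 1) ∧
      (∀ x ∈ Set.Ioo (0:ℝ) 1,
        4 * g x * (1 - g x) = (27/4) * x ^ 2 * (1 - x) ^ 2 / (1 - x + x ^ 2) ^ 3) ∧
      (∀ β ∈ Set.Ioo (0:ℝ) (π/3),
        g (2 * Real.sin β / (Real.sin β + Real.sqrt 3 * Real.cos β)) =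
          Real.sin (3 * β / 2) ^ 2) ∧
      (∀ x ∈ Set.Ioo (0:ℝ) 1, g (1 - x) = 1 - g x) := by
  refine ⟨modularMap, strictMonoOn_modularMap.mono Ioo_subset_Icc_self, bijOn_modularMap,
    fun x hx => four_mul_modularMap_mul_one_sub (by linarith [hx.2]), fun β hβ => ?_,
    fun x hx => modularMap_one_sub ⟨by linarith [hx.1], by linarith [hx.2]⟩⟩
  obtain ⟨hβ0, hβ1⟩ := hβ
  have hsin : 0 < sin β := sin_pos_of_pos_of_lt_pi hβ0 (by linarith)
  have hcos : 0 < cos β := cos_pos_of_mem_Ioo ⟨by linarith, by linarith⟩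
  exact modularMap_two_mul_sin_div ⟨by linarith, by linarith⟩ (by positivity)
end
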